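/- arXiv:2410.04950 — 2 statements merged into one kernel-verified Lean document; each statement's English description precedes it below -/
import Mathlib

section
/- If f ∈ ℂ[X, Y] is a polynomial in two variables such that f(z, exp(z)) = 0 for every complex number z, then f is the zero polynomial. In other words, the functions z and e^z are algebraically independent over ℂ. -/
open MvPolynomial Polynomial

private lemma eval_aeval_pair (f : MvPolynomial (Fin 2) ℂ) (g : Fin 2 → Polynomial ℂ)
    (z : ℂ) :
    Polynomial.eval z (MvPolynomial.aeval g f) =
      MvPolynomial.eval (fun i => Polynomial.eval z (g i)) f := by
  induction f using MvPolynomial.induction_on with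
  | C a => simp
  | add p q hp hq => simp [hp, hq]
  | mul_X p i hp => simp [hp]

/-- If a two-variable complex polynomial `f` satisfies `f(z, exp z) = 0` for all `z : ℂ`,
then `f = 0`: the functions `z` and `e^z` are algebraically independent over `ℂ`. -/
theorem algebraicIndependence_id_exp (f : MvPolynomial (Fin 2) ℂ)
    (h : ∀ z : ℂ, MvPolynomial.eval ![z, Complex.exp z] f = 0) :
    f = 0 := by
  -- Step 1: for every w ≠ 0 and every z, f(z, w) = 0.
  have key : ∀ w : ℂ, w ≠ 0 → ∀ z : ℂ, MvPolynomial.eval ![z, w] f = 0 := by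
    intro w hw z
    set p : Polynomial ℂ := MvPolynomial.aeval ![Polynomial.X, Polynomial.C w] f with hp
    have hroot : ∀ n : ℕ, p.IsRoot (Complex.log w + n * (2 * Real.pi * Complex.I)) := by
      intro n
      have he : Complex.exp (Complex.log w + n * (2 * Real.pi * Complex.I)) = w := by
        rw [Complex.exp_add, Complex.exp_log hw]
        have := Complex.exp_int_mul_two_pi_mul_I (n : ℤ)
        push_cast at this
        rw [this, mul_one]
      have := h (Complex.log w + n * (2 * Real.pi * Complex.I))
      rw [he] at this
      simpa [Polynomial.IsRoot, hp, eval_aeval_pair, Matrix.cons_val_zero,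
        Matrix.cons_val_one, Matrix.head_cons,
        show (fun i => Polynomial.eval (Complex.log w + n * (2 * Real.pi * Complex.I))
          (![Polynomial.X, Polynomial.C w] i)) =
          ![Complex.log w + n * (2 * Real.pi * Complex.I), w] from by
            funext i; fin_cases i <;> simp] using this
    have hpz : p = 0 := by
      apply Polynomial.eq_zero_of_infinite_isRoot
      apply Set.infinite_of_injective_forall_mem
        (f := fun n : ℕ => Complex.log w + n * (2 * Real.pi * Complex.I))
      · intro a b hab
        have h2 : (2 * Real.pi * Complex.I) ≠ 0 := by
          simp [Real.pi_ne_zero, Complex.I_ne_zero, Complex.ofReal_ne_zero]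
        have : (a : ℂ) = b := by
          have hab' : (a : ℂ) * (2 * Real.pi * Complex.I) = b * (2 * Real.pi * Complex.I) := by
            linear_combination hab
          exact mul_right_cancel₀ h2 hab'
        exact_mod_cast this
      · exact hroot
    have := congrArg (Polynomial.eval z) hpz
    rw [eval_aeval_pair] at this
    simpa [show (fun i => Polynomial.eval z (![Polynomial.X, Polynomial.C w] i)) = ![z, w]
      from by funext i; fin_cases i <;> simp] using this
  -- Step 2: for every z, w, f(z, w) = 0.
  have key2 : ∀ z w : ℂ, MvPolynomial.eval ![z, w] f = 0 := by
    intro z w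
    set q : Polynomial ℂ := MvPolynomial.aeval ![Polynomial.C z, Polynomial.X] f with hq
    have hqz : q = 0 := by
      apply Polynomial.eq_zero_of_infinite_isRoot
      apply Set.infinite_of_injective_forall_mem
        (f := fun n : ℕ => ((n : ℂ) + 1))
      · intro a b hab
        have : (a : ℂ) = b := by linear_combination hab
        exact_mod_cast this
      · intro n
        have hne : ((n : ℂ) + 1) ≠ 0 := by
          intro hc
          have : ((n : ℂ) + 1) ≠ 0 := by
            exact_mod_cast Nat.cast_add_one_ne_zero (R := ℂ) n
          exact this hc
        have := key ((n : ℂ) + 1) hne z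
        simpa [Polynomial.IsRoot, hq, eval_aeval_pair,
          show (fun i => Polynomial.eval ((n : ℂ) + 1) (![Polynomial.C z, Polynomial.X] i)) =
            ![z, (n : ℂ) + 1] from by funext i; fin_cases i <;> simp] using this
    have := congrArg (Polynomial.eval w) hqz
    rw [eval_aeval_pair] at this
    simpa [show (fun i => Polynomial.eval w (![Polynomial.C z, Polynomial.X] i)) = ![z, w]
      from by funext i; fin_cases i <;> simp] using this
  apply MvPolynomial.funext
  intro x
  have := key2 (x 0) (x 1)
  rw [show ![x 0, x 1] = x from by funext i; fin_cases i <;> rfl] at this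
  simpa using this
end

section
/- Let R be a nontrivial commutative ring. The canonical injective ring homomorphism from the Laurent polynomial ring over the power series ring, (R⟦s⟧)[t, t⁻¹], into the power series ring over the Laurent polynomial ring, (R[t, t⁻¹])⟦s⟧, is not surjective: the power series Σ_{n≥0} tⁿ·sⁿ is not in its image. -/
open LaurentPolynomial PowerSeries

variable (R : Type) [CommRing R]

noncomputable def Tmh : Multiplicative ℤ →* PowerSeries (LaurentPolynomial R) where
  toFun m := PowerSeries.C (LaurentPolynomial.T (Multiplicative.toAdd m))
  map_one' := by simp
  map_mul' x y := by
    show PowerSeries.C (LaurentPolynomial.T (Multiplicative.toAdd x + Multiplicative.toAdd y)) = _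
    rw [LaurentPolynomial.T_add, map_mul]

noncomputable def myphi : LaurentPolynomial (PowerSeries R) →+* PowerSeries (LaurentPolynomial R) :=
  AddMonoidAlgebra.liftNCRingHom (PowerSeries.map LaurentPolynomial.C) (Tmh R)
    (fun _ _ => Commute.all _ _)

theorem myphi_single (m : ℤ) (f : PowerSeries R) :
    myphi R (AddMonoidAlgebra.single m f) = PowerSeries.map LaurentPolynomial.C f *
      PowerSeries.C (LaurentPolynomial.T m) := by
  show AddMonoidAlgebra.liftNC _ _ _ = _
  erw [AddMonoidAlgebra.liftNC_single]
  rfl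

theorem myphi_key (p : LaurentPolynomial (PowerSeries R)) (n : ℕ) (m : ℤ) :
    (PowerSeries.coeff n (myphi R p)).coeff m = PowerSeries.coeff n (p.coeff m) := by
  induction p using AddMonoidAlgebra.induction_linear with
  | zero => simp
  | add f g hf hg =>
    rw [map_add, map_add, AddMonoidAlgebra.coeff_add, AddMonoidAlgebra.coeff_add]
    rw [Finsupp.add_apply, Finsupp.add_apply]
    rw [map_add, hf, hg]
  | single a b =>
    rw [myphi_single, PowerSeries.coeff_mul_C, PowerSeries.coeff_map]
    erw [Finsupp.single_apply]
    rw [← LaurentPolynomial.single_eq_C_mul_T]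
    erw [Finsupp.single_apply]
    split <;> simp

/-- Over a nontrivial commutative ring `R`, the canonical injective ring homomorphism
`(R⟦s⟧)[t, t⁻¹] → (R[t, t⁻¹])⟦s⟧` (sending a Laurent polynomial with power-series
coefficients to the corresponding power series, coefficientwise, and `t` to `t`)
is not surjective: the power series `Σ_{n≥0} tⁿ sⁿ` is not in its image. -/
theorem laurent_powerSeries_swap_not_surjective (R : Type) [CommRing R] [Nontrivial R] :
    ∃ φ : LaurentPolynomial (PowerSeries R) →+* PowerSeries (LaurentPolynomial R),
      (∀ f : PowerSeries R, φ (LaurentPolynomial.C f) =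
        PowerSeries.mk fun n => LaurentPolynomial.C (PowerSeries.coeff n f)) ∧
      φ (LaurentPolynomial.T 1) = PowerSeries.C (LaurentPolynomial.T 1 : LaurentPolynomial R) ∧
      Function.Injective φ ∧
      (PowerSeries.mk fun n => LaurentPolynomial.T (n : ℤ)) ∉ Set.range φ := by
  refine ⟨myphi R, ?_, ?_, ?_, ?_⟩
  · intro f
    have : LaurentPolynomial.C f = AddMonoidAlgebra.single (0 : ℤ) f := rfl
    rw [this, myphi_single]
    ext n
    simp
  · have : (LaurentPolynomial.T 1 : LaurentPolynomial (PowerSeries R)) =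
        AddMonoidAlgebra.single (1 : ℤ) 1 := rfl
    rw [this, myphi_single]
    simp
  · intro p q h
    have key : ∀ (n : ℕ) (m : ℤ), PowerSeries.coeff n (p.coeff m) = PowerSeries.coeff n (q.coeff m) := by
      intro n m
      rw [← myphi_key, ← myphi_key, h]
    have : ∀ m : ℤ, p.coeff m = q.coeff m := fun m => PowerSeries.ext fun n => key n m
    exact AddMonoidAlgebra.coeff_injective (Finsupp.ext this)
  · rintro ⟨p, hp⟩
    have key : ∀ n : ℕ, PowerSeries.coeff n (p.coeff (n : ℤ)) = 1 := by
      intro n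
      have := myphi_key R p n (n : ℤ)
      rw [hp] at this
      rw [← this]
      simp
    have hmem : ∀ n : ℕ, (n : ℤ) ∈ p.coeff.support := by
      intro n
      rw [Finsupp.mem_support_iff]
      intro h0
      have := key n
      rw [h0] at this
      simp at this
    have hinf : (↑p.coeff.support : Set ℤ).Infinite :=
      Set.infinite_of_injective_forall_mem (f := fun n : ℕ => (n : ℤ))
        (fun a b h => by simpa using h) hmem
    exact hinf p.coeff.support.finite_toSet
end
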